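/- arXiv:1605.03502 — 7 statements merged into one kernel-verified Lean document; each statement's English description precedes it below -/
import Mathlib

section
/- If P is an n×n irreducible stochastic matrix and Q is a generator matrix with P = e^Q, then Q is irreducible (i.e., the continuous-time Markov chain with generator Q has a single communicating class). -/
open Matrix

/-- `P` is a stochastic matrix: nonnegative entries, rows sum to 1. -/
def IsStochastic {n : ℕ} (P : Matrix (Fin n) (Fin n) ℝ) : Prop :=
  (∀ i j, 0 ≤ P i j) ∧ ∀ i, ∑ j, P i j = 1

/-- `Q` is a generator matrix: nonnegative off-diagonal entries, rows sum to 0. -/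
def IsGenerator {n : ℕ} (Q : Matrix (Fin n) (Fin n) ℝ) : Prop :=
  (∀ i j, i ≠ j → 0 ≤ Q i j) ∧ ∀ i, ∑ j, Q i j = 0

/-- A stochastic matrix is irreducible if its directed graph (edge `i → j` when
`P i j > 0`) is strongly connected. -/
def IsIrreducibleStochastic {n : ℕ} (P : Matrix (Fin n) (Fin n) ℝ) : Prop :=
  ∀ i j : Fin n, Relation.ReflTransGen (fun a b => 0 < P a b) i j

/-- A generator matrix is irreducible if the directed graph with an edge `i → j`
whenever `i ≠ j` and `Q i j > 0` is strongly connected. -/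
def IsIrreducibleGenerator {n : ℕ} (Q : Matrix (Fin n) (Fin n) ℝ) : Prop :=
  ∀ i j : Fin n, Relation.ReflTransGen (fun a b => a ≠ b ∧ 0 < Q a b) i j

/-!
If `i` cannot reach `j` in the graph of `Q`, let `S` be the set of states `i` reaches. Then `Q`
has no entry from `S` to its complement; matrices with this block-triangular zero pattern form a
closed subalgebra, so it contains `exp Q = P`, and `P i j = 0`. Hence every edge of `P` is a
path of `Q`, and irreducibility passes from `P` to `Q`.
-/

open Relation

namespace Matrix

variable {m R : Type*}

/-- As `False < True` in `Prop`, this says that no entry of `M` leads from the vertices reachable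
from `i` in its support graph to the other vertices. -/
theorem blockTriangular_reflTransGen [Zero R] (M : Matrix m m R) (i : m) :
    M.BlockTriangular (ReflTransGen (fun a b => a ≠ b ∧ M a b ≠ 0) i) := by
  intro a b hba
  obtain ⟨ha, hb⟩ := Classical.not_imp.mp hba.2
  by_contra hab
  have hne : a ≠ b := by rintro rfl; exact hb ha
  exact hb (ha.tail ⟨hne, hab⟩)

theorem reflTransGen_of_exp_apply_ne_zero [Fintype m] [DecidableEq m] [Ring R] [Algebra ℚ R]
    [TopologicalSpace R] [IsTopologicalRing R] [T2Space R] {M : Matrix m m R} {i j : m}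
    (hij : NormedSpace.exp M i j ≠ 0) :
    ReflTransGen (fun a b => a ≠ b ∧ M a b ≠ 0) i j := by
  by_contra hj
  exact hij ((M.blockTriangular_reflTransGen i).exp
    ⟨fun h => (hj h).elim, fun h => hj (h .refl)⟩)

end Matrix

theorem embedding_of_irreducible_is_irreducible_general {n : ℕ}
    (P Q : Matrix (Fin n) (Fin n) ℝ)
    (hPirr : IsIrreducibleStochastic P)
    (hQ : IsGenerator Q) (hPQ : NormedSpace.exp Q = P) :
    IsIrreducibleGenerator Q := by
  subst hPQ
  intro i j
  refine (hPirr i j).lift' id fun a b hab => ?_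
  exact ReflTransGen.mono (fun x y ⟨hxy, hQxy⟩ => ⟨hxy, (hQ.1 x y hxy).lt_of_ne' hQxy⟩) _ _
    (Matrix.reflTransGen_of_exp_apply_ne_zero hab.ne')

theorem embedding_of_irreducible_is_irreducible {n : ℕ}
    (P Q : Matrix (Fin n) (Fin n) ℝ)
    (hP : IsStochastic P) (hPirr : IsIrreducibleStochastic P)
    (hQ : IsGenerator Q) (hPQ : NormedSpace.exp Q = P) :
    IsIrreducibleGenerator Q :=
  embedding_of_irreducible_is_irreducible_general P Q hPirr hQ hPQ
end

section
/- If Q is a reversible generator matrix (with reversible distribution π having all positive entries) and P = e^Q, then P is reversible with respect to π and all eigenvalues of P are positive real numbers. -/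
/-!
Reversibility of `Q` says `diagonal π * Q = Qᵀ * diagonal π`; this intertwining passes to every
power of `Q`, hence to `exp Q`. Conjugating by `diagonal √π` turns `Q` into a symmetric matrix `S`,
so `exp Q` is similar to `exp S = (exp (S/2))ᴴ * exp (S/2)`, which is positive definite and thus
has positive real eigenvalues.
-/

open Matrix

open scoped ComplexOrder

namespace Matrix

variable {ι : Type*} [Fintype ι] [DecidableEq ι]

def IsReversible {R : Type*} [Mul R] (π : ι → R) (A : Matrix ι ι R) : Prop :=
  ∀ i j, π i * A i j = π j * A j i

theorem isReversible_iff_semiconjBy {R : Type*} [CommSemiring R] {π : ι → R}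
    {A : Matrix ι ι R} : IsReversible π A ↔ SemiconjBy (diagonal π) A Aᵀ := by
  simp only [SemiconjBy, ← Matrix.ext_iff, diagonal_mul, mul_diagonal, transpose_apply,
    mul_comm (A _ _)]
  rfl

theorem IsReversible.exp {𝕜 : Type*} [RCLike 𝕜] {π : ι → 𝕜} {A : Matrix ι ι 𝕜}
    (h : IsReversible π A) : IsReversible π (NormedSpace.exp A) := by
  rw [isReversible_iff_semiconjBy, ← exp_transpose] at *
  exact open scoped Matrix.Norms.Operator in h.exp_right

theorem IsReversible.isSymm_diagonal_sqrt_conj {π : ι → ℝ} {A : Matrix ι ι ℝ}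
    (h : IsReversible π A) (hπ : ∀ i, 0 < π i) :
    (diagonal (fun i => √(π i)) * A * diagonal (fun i => (√(π i))⁻¹)).IsSymm := by
  refine IsSymm.ext fun i j => ?_
  have key := h j i
  rw [← Real.mul_self_sqrt (hπ i).le, ← Real.mul_self_sqrt (hπ j).le] at key
  have := Real.sqrt_pos.2 (hπ i)
  have := Real.sqrt_pos.2 (hπ j)
  simp only [mul_diagonal, diagonal_mul]
  field_simp
  linear_combination key

theorem IsReversible.exists_isSymm_units_conj {π : ι → ℝ} {A : Matrix ι ι ℝ}
    (h : IsReversible π A) (hπ : ∀ i, 0 < π i) :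
    ∃ U : (Matrix ι ι ℝ)ˣ, IsSymm (U * A * U⁻¹ : Matrix ι ι ℝ) := by
  have hne : ∀ i, √(π i) ≠ 0 := fun i => (Real.sqrt_pos.2 (hπ i)).ne'
  refine ⟨⟨diagonal (fun i => √(π i)), diagonal (fun i => (√(π i))⁻¹), ?_, ?_⟩,
    h.isSymm_diagonal_sqrt_conj hπ⟩ <;> simp [diagonal_mul_diagonal, hne]

theorem exp_map_ofReal (A : Matrix ι ι ℝ) :
    (NormedSpace.exp A).map Complex.ofReal = NormedSpace.exp (A.map Complex.ofReal) :=
  open scoped Matrix.Norms.Operator in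
  NormedSpace.map_exp Complex.ofRealHom.mapMatrix
    (continuous_id.matrix_map Complex.continuous_ofReal) A

theorem IsHermitian.posDef_exp {𝕜 : Type*} [RCLike 𝕜] {A : Matrix ι ι 𝕜} (hA : A.IsHermitian) :
    (NormedSpace.exp A).PosDef := by
  set B := NormedSpace.exp ((2⁻¹ : ℝ) • A)
  have hB : Bᴴ = B := by rw [← exp_conjTranspose, (hA.smul (by simp)).eq]
  have hsq : NormedSpace.exp A = Bᴴ * B := by
    rw [hB, ← exp_add_of_commute _ _ (Commute.refl _), ← add_smul]
    norm_num
  exact (hsq ▸ posSemidef_conjTranspose_mul_self B).posDef_iff_isUnit.2 (isUnit_exp A)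

theorem PosDef.im_eq_zero_and_re_pos_of_mem_spectrum {A : Matrix ι ι ℂ} (hA : A.PosDef) {z : ℂ}
    (hz : z ∈ spectrum ℂ A) : z.im = 0 ∧ 0 < z.re := by
  obtain ⟨_, ⟨i, rfl⟩, rfl⟩ := hA.isHermitian.spectrum_eq_image_range ▸ hz
  exact ⟨Complex.ofReal_im _, hA.eigenvalues_pos i⟩

end Matrix

theorem spectrum_map_units_conj {R A B F : Type*} [CommSemiring R] [Ring A] [Ring B]
    [Algebra R B] [FunLike F A B] [MonoidHomClass F A B] (f : F) (u : Aˣ) (a : A) :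
    spectrum R (f (u * a * ↑u⁻¹)) = spectrum R (f a) := by
  rw [map_mul, map_mul]
  exact spectrum.units_conjugate (u := Units.map (f : A →* B) u)

theorem exp_of_reversible_generator_general {n : ℕ}
    (Q P : Matrix (Fin n) (Fin n) ℝ) (π : Fin n → ℝ)
    (hπpos : ∀ i, 0 < π i)
    (hrev : ∀ i j, π i * Q i j = π j * Q j i)
    (hPQ : P = NormedSpace.exp Q) :
    (∀ i j, π i * P i j = π j * P j i) ∧
    (∀ z ∈ spectrum ℂ (P.map Complex.ofReal), z.im = 0 ∧ 0 < z.re) := by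
  subst hPQ
  refine ⟨IsReversible.exp hrev, fun z hz => ?_⟩
  obtain ⟨U, hU⟩ := IsReversible.exists_isSymm_units_conj hrev hπpos
  have hS : ((U * Q * U⁻¹ : Matrix (Fin n) (Fin n) ℝ).map Complex.ofReal).IsHermitian :=
    (isHermitian_iff_isSymm.2 hU).map _ fun x => (Complex.conj_ofReal x).symm
  have hspec : spectrum ℂ ((NormedSpace.exp Q).map Complex.ofReal) = spectrum ℂ
      (NormedSpace.exp ((U * Q * U⁻¹ : Matrix (Fin n) (Fin n) ℝ).map Complex.ofReal)) := by
    rw [← exp_map_ofReal, exp_units_conj]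
    exact (spectrum_map_units_conj Complex.ofRealHom.mapMatrix U _).symm
  exact hS.posDef_exp.im_eq_zero_and_re_pos_of_mem_spectrum (hspec ▸ hz)

theorem exp_of_reversible_generator {n : ℕ}
    (Q P : Matrix (Fin n) (Fin n) ℝ) (π : Fin n → ℝ)
    (hQ : IsGenerator Q)
    (hπpos : ∀ i, 0 < π i) (hπsum : ∑ i, π i = 1)
    (hrev : ∀ i j, π i * Q i j = π j * Q j i)
    (hPQ : P = NormedSpace.exp Q) :
    (∀ i j, π i * P i j = π j * P j i) ∧
    (∀ z ∈ spectrum ℂ (P.map Complex.ofReal), z.im = 0 ∧ 0 < z.re) :=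
  exp_of_reversible_generator_general Q P π hπpos hrev hPQ
end

section
/- If A is a real (or complex) square matrix all of whose eigenvalues are real and such that e^A is diagonalizable, then A is diagonalizable. -/
open Matrix Polynomial Module.End
open scoped Nat

/-!
Over `ℂ` a matrix is diagonalizable iff it is semisimple. Write `A = S + N` with `S` semisimple,
`N` nilpotent and `SN = NS` (Jordan–Chevalley). Then `exp A = exp S * exp N`, where `exp S` is
semisimple and `exp N - 1 = N * u` with `u` a unit commuting with `N`. So `exp A` and `exp S` are
commuting semisimple matrices whose difference `exp S * (exp N - 1)` is nilpotent, hence they are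
equal; thus `exp N = 1`, and `N * u = 0` forces `N = 0`.
-/

namespace NormedSpace

variable {𝔸 : Type*} [Ring 𝔸] [Algebra ℚ 𝔸] [TopologicalSpace 𝔸] [IsTopologicalRing 𝔸]

theorem exists_exp_sub_one_eq_mul {N : 𝔸} (hN : IsNilpotent N) :
    ∃ u, IsUnit u ∧ Commute N u ∧ exp N - 1 = N * u := by
  obtain ⟨k, hk⟩ := hN
  let C := ∑ j ∈ Finset.range k, ((j + 2)! : ℚ)⁻¹ • N ^ j
  have hNC : Commute N C :=
    Commute.sum_right _ _ _ fun j _ ↦ ((Commute.refl N).pow_right j).smul_right _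
  refine ⟨1 + N * C, (hNC.isNilpotent_mul_right ⟨k, hk⟩).isUnit_one_add,
    (Commute.one_right N).add_right ((Commute.refl N).mul_right hNC), ?_⟩
  have hexp : exp N = ∑ j ∈ Finset.range (k + 2), (j ! : ℚ)⁻¹ • N ^ j := by
    rw [exp_eq_tsum_rat]
    refine tsum_eq_sum fun j hj ↦ ?_
    rw [pow_eq_zero_of_le (by rw [Finset.mem_range] at hj; omega) hk, smul_zero]
  have hNNC : N * (N * C) = ∑ j ∈ Finset.range k, ((j + 2)! : ℚ)⁻¹ • N ^ (j + 2) := by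
    simp only [C, Finset.mul_sum, mul_smul_comm, ← pow_succ']
  rw [hexp, Finset.sum_range_succ', Finset.sum_range_succ', mul_add, mul_one, hNNC]
  simp only [zero_add, Nat.factorial_one, Nat.cast_one, inv_one, pow_one, one_smul,
    Nat.factorial_zero, pow_zero, add_sub_cancel_right]
  exact add_comm _ _

theorem isNilpotent_exp_sub_one {N : 𝔸} (hN : IsNilpotent N) : IsNilpotent (exp N - 1) := by
  obtain ⟨u, -, hNu, hexp⟩ := exists_exp_sub_one_eq_mul hN
  exact hexp ▸ hNu.isNilpotent_mul_right hN

theorem eq_zero_of_isNilpotent_of_exp_eq_one {N : 𝔸} (hN : IsNilpotent N) (h : exp N = 1) :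
    N = 0 := by
  obtain ⟨u, hu, -, hexp⟩ := exists_exp_sub_one_eq_mul hN
  rwa [h, sub_self, eq_comm, hu.mul_left_eq_zero] at hexp

end NormedSpace

namespace Matrix

variable {n K : Type*} [Fintype n] [DecidableEq n]

def IsDiagonalizable [CommRing K] (M : Matrix n n K) : Prop :=
  ∃ T D : Matrix n n K, IsUnit T ∧ D.IsDiag ∧ M = T * D * T⁻¹

section Field

variable [Field K]

theorem isSemisimple_toLin'_of_isDiag {D : Matrix n n K} (hD : D.IsDiag) :
    IsSemisimple (toLin' D) := by
  classical
  obtain ⟨d, rfl⟩ : ∃ d, D = diagonal d := ⟨_, hD.diagonal_diag.symm⟩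
  refine isSemisimple_of_squarefree_aeval_eq_zero
    (p := ∏ μ ∈ Finset.univ.image d, (X - C μ))
    (separable_prod_X_sub_C_iff'.mpr fun _ _ _ _ h ↦ h).squarefree ?_
  change aeval (toLinAlgEquiv' (diagonalAlgHom K d)) _ = 0
  suffices aeval d (∏ μ ∈ Finset.univ.image d, (X - C μ)) = 0 by
    rw [aeval_algHom_apply, aeval_algHom_apply, this, map_zero, map_zero]
  ext i
  simp [Finset.prod_eq_zero_iff, sub_eq_zero]

theorem IsDiagonalizable.isSemisimple_toLin' {M : Matrix n n K} (hM : M.IsDiagonalizable) :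
    IsSemisimple (toLin' M) := by
  obtain ⟨T, D, hT, hD, rfl⟩ := hM
  have := hT.invertible
  refine ((toLinearEquiv' T this).isSemisimple_iff _ _ ?_).mp (isSemisimple_toLin'_of_isDiag hD)
  ext1 v
  simp [toLinearEquiv'_apply, ← toLin'_mul, Matrix.mul_assoc, inv_mul_of_invertible]

end Field

theorem _root_.LinearMap.toMatrix_eq_diagonal_of_apply_eq_smul {R M ι : Type*} [CommRing R]
    [AddCommGroup M] [Module R M] [Fintype ι] [DecidableEq ι] (b : Module.Basis ι R M)
    {f : Module.End R M} {d : ι → R} (hf : ∀ i, f (b i) = d i • b i) :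
    LinearMap.toMatrix b b f = diagonal d := by
  ext i j
  rw [LinearMap.toMatrix_apply, hf, map_smul, b.repr_self, diagonal_apply]
  by_cases h : i = j <;> simp [h]

theorem isDiagonalizable_of_apply_basis_eq_smul {R : Type*} [CommRing R] {M : Matrix n n R}
    (b : Module.Basis n R (n → R)) {d : n → R} (hb : ∀ i, toLin' M (b i) = d i • b i) :
    M.IsDiagonalizable := by
  let e := Pi.basisFun R n
  refine ⟨e.toMatrix b, diagonal d, ?_, isDiag_diagonal d, ?_⟩
  · have := e.invertibleToMatrix b
    exact isUnit_of_invertible _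
  · rw [inv_eq_right_inv (e.toMatrix_mul_toMatrix_flip b),
      ← LinearMap.toMatrix_eq_diagonal_of_apply_eq_smul b hb,
      basis_toMatrix_mul_linearMap_toMatrix_mul_basis_toMatrix, LinearMap.toMatrix_eq_toMatrix',
      LinearMap.toMatrix'_toLin']

theorem isDiagonalizable_of_isSemisimple_toLin' [Field K] [IsAlgClosed K] {M : Matrix n n K}
    (hM : IsSemisimple (toLin' M)) : M.IsDiagonalizable := by
  classical
  have hM' := DirectSum.isInternal_submodule_of_iSupIndep_of_iSup_eq_top
    (eigenspaces_iSupIndep (toLin' M)) hM.iSup_eigenspace_eq_top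
  let b := hM'.collectedBasis fun μ ↦ Module.finBasis K (eigenspace (toLin' M) μ)
  let e := b.indexEquiv (Pi.basisFun K n)
  refine isDiagonalizable_of_apply_basis_eq_smul (b.reindex e) (d := fun i ↦ (e.symm i).1)
    fun i ↦ ?_
  rw [b.reindex_apply]
  exact mem_eigenspace_iff.mp (hM'.collectedBasis_mem _ _)

theorem exists_isSemisimple_toLin'_isNilpotent [Field K] [PerfectField K] (M : Matrix n n K) :
    ∃ S N : Matrix n n K, IsSemisimple (toLin' S) ∧ IsNilpotent N ∧ Commute S N ∧ M = S + N := by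
  obtain ⟨N, hNM, S, hSM, hN, hS, hM⟩ := exists_isNilpotent_isSemisimple (f := toLin' M)
  have hSN : Commute S N := Algebra.commute_of_mem_adjoin_singleton_of_commute hNM
    (Algebra.commute_of_mem_adjoin_self hSM).symm
  refine ⟨LinearMap.toMatrix' S, LinearMap.toMatrix' N, by rwa [toLin'_toMatrix'],
    hN.map LinearMap.toMatrixAlgEquiv', hSN.map LinearMap.toMatrixAlgEquiv', ?_⟩
  apply toLin'.injective
  rw [map_add, toLin'_toMatrix', toLin'_toMatrix', hM, add_comm]

theorem eq_of_isSemisimple_toLin'_of_isNilpotent_sub [Field K] [PerfectField K]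
    {M M' : Matrix n n K} (hM : IsSemisimple (toLin' M)) (hM' : IsSemisimple (toLin' M'))
    (hc : Commute M M') (hn : IsNilpotent (M - M')) : M = M' := by
  rw [← sub_eq_zero, ← toLin'.map_eq_zero_iff]
  refine eq_zero_of_isNilpotent_isSemisimple (hn.map toLinAlgEquiv') ?_
  rw [map_sub]
  exact hM.sub_of_commute (hc.map toLinAlgEquiv') hM'

theorem IsDiagonalizable.exp {R : Type*} [NormedCommRing R] [NormedAlgebra ℚ R] [CompleteSpace R]
    {M : Matrix n n R} (hM : M.IsDiagonalizable) : (NormedSpace.exp M).IsDiagonalizable := by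
  obtain ⟨T, D, hT, hD, rfl⟩ := hM
  refine ⟨T, NormedSpace.exp D, hT, ?_, exp_conj T D hT⟩
  rw [← hD.diagonal_diag, exp_diagonal]
  exact isDiag_diagonal _

theorem isSemisimple_toLin'_of_isSemisimple_toLin'_exp (A : Matrix n n ℂ)
    (h : IsSemisimple (toLin' (NormedSpace.exp A))) : IsSemisimple (toLin' A) := by
  obtain ⟨S, N, hS, hN, hSN, rfl⟩ := exists_isSemisimple_toLin'_isNilpotent A
  have hexpS : IsSemisimple (toLin' (NormedSpace.exp S)) :=
    (isDiagonalizable_of_isSemisimple_toLin' hS).exp.isSemisimple_toLin'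
  have hexp : NormedSpace.exp (S + N) = NormedSpace.exp S * NormedSpace.exp N :=
    exp_add_of_commute S N hSN
  have hcomm : Commute (NormedSpace.exp S) (NormedSpace.exp N) := hSN.exp
  have hexpSN : NormedSpace.exp (S + N) = NormedSpace.exp S := by
    refine eq_of_isSemisimple_toLin'_of_isNilpotent_sub h hexpS ?_ ?_
    · rw [hexp]
      exact (Commute.refl _).mul_left hcomm.symm
    · rw [hexp, ← mul_sub_one]
      exact (hcomm.sub_right (Commute.one_right _)).isNilpotent_mul_left
        (NormedSpace.isNilpotent_exp_sub_one hN)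
  have hexpN : NormedSpace.exp N = 1 :=
    (isUnit_exp S).mul_left_cancel (by rw [← hexp, hexpSN, mul_one])
  rwa [NormedSpace.eq_zero_of_isNilpotent_of_exp_eq_one hN hexpN, add_zero]

end Matrix

theorem diagonalizable_of_exp_diagonalizable_general {n : ℕ}
    (A : Matrix (Fin n) (Fin n) ℂ)
    (hdiag : ∃ T D : Matrix (Fin n) (Fin n) ℂ,
      IsUnit T ∧ D.IsDiag ∧ NormedSpace.exp A = T * D * T⁻¹) :
    ∃ T D : Matrix (Fin n) (Fin n) ℂ, IsUnit T ∧ D.IsDiag ∧ A = T * D * T⁻¹ :=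
  isDiagonalizable_of_isSemisimple_toLin'
    (isSemisimple_toLin'_of_isSemisimple_toLin'_exp A (IsDiagonalizable.isSemisimple_toLin' hdiag))

theorem diagonalizable_of_exp_diagonalizable {n : ℕ}
    (A : Matrix (Fin n) (Fin n) ℂ)
    (hreal : ∀ z ∈ spectrum ℂ A, z.im = 0)
    (hdiag : ∃ T D : Matrix (Fin n) (Fin n) ℂ,
      IsUnit T ∧ D.IsDiag ∧ NormedSpace.exp A = T * D * T⁻¹) :
    ∃ T D : Matrix (Fin n) (Fin n) ℂ, IsUnit T ∧ D.IsDiag ∧ A = T * D * T⁻¹ :=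
  diagonalizable_of_exp_diagonalizable_general A hdiag
end

section
/- Let P be a diagonalizable stochastic matrix with all eigenvalues positive, and let H be the candidate of P (H = T log D T⁻¹ for any real diagonalization P = T D T⁻¹). Then H·1 = 0, where 1 is the all-ones column vector, i.e., each row of H sums to zero. -/
open Matrix

/-!
If `P = T D T⁻¹` fixes the all-ones vector `1`, then `v = T⁻¹ 1` is fixed by the diagonal
matrix `D`, so `v` vanishes at every index where the eigenvalue is not `1`. At the remaining
indices `log 1 = 0`, hence `(log D) v = 0` and `H 1 = T (log D) v = 0`.
-/

theorem IsStochastic.mulVec_one {n : ℕ} {P : Matrix (Fin n) (Fin n) ℝ} (hP : IsStochastic P) :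
    P *ᵥ (fun _ => (1 : ℝ)) = fun _ => 1 := by
  funext i
  simp only [mulVec, dotProduct, mul_one, hP.2 i]

namespace Matrix

variable {ι R : Type*} [Fintype ι] [DecidableEq ι]

theorem mulVec_inv_mulVec_eq_of_conj_mulVec_eq [CommRing R] {T D : Matrix ι ι R} (hT : IsUnit T)
    {x : ι → R} (hx : (T * D * T⁻¹) *ᵥ x = x) : D *ᵥ (T⁻¹ *ᵥ x) = T⁻¹ *ᵥ x := by
  have hdet : IsUnit T.det := (isUnit_iff_isUnit_det T).mp hT
  calc D *ᵥ (T⁻¹ *ᵥ x) = (T⁻¹ * (T * (D * T⁻¹))) *ᵥ x := by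
        rw [nonsing_inv_mul_cancel_left T (D * T⁻¹) hdet, mulVec_mulVec]
    _ = T⁻¹ *ᵥ x := by rw [← mulVec_mulVec, ← Matrix.mul_assoc, hx]

theorem diagonal_comp_mulVec_eq_zero_of_diagonal_mulVec_eq [Ring R] [NoZeroDivisors R]
    {f : R → R} (hf : f 1 = 0) {d v : ι → R} (hv : diagonal d *ᵥ v = v) :
    diagonal (fun i => f (d i)) *ᵥ v = 0 := by
  funext i
  have hi : d i * v i = 1 * v i := by
    simpa only [mulVec_diagonal, one_mul] using congrFun hv i
  rw [mulVec_diagonal, Pi.zero_apply]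
  rcases eq_or_ne (v i) 0 with h | h
  · rw [h, mul_zero]
  · rw [mul_right_cancel₀ h hi, hf, zero_mul]

end Matrix

theorem candidate_row_sums_zero_general {n : ℕ}
    (P T H : Matrix (Fin n) (Fin n) ℝ) (lam : Fin n → ℝ)
    (hP : IsStochastic P)
    (hT : IsUnit T)
    (hdiag : P = T * Matrix.diagonal lam * T⁻¹)
    (hH : H = T * Matrix.diagonal (fun i => Real.log (lam i)) * T⁻¹) :
    H *ᵥ (fun _ => (1 : ℝ)) = 0 := by
  have hfixed := mulVec_inv_mulVec_eq_of_conj_mulVec_eq hT (hdiag ▸ hP.mulVec_one)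
  rw [hH, ← mulVec_mulVec, ← mulVec_mulVec,
    diagonal_comp_mulVec_eq_zero_of_diagonal_mulVec_eq Real.log_one hfixed, mulVec_zero]

theorem candidate_row_sums_zero {n : ℕ}
    (P T H : Matrix (Fin n) (Fin n) ℝ) (lam : Fin n → ℝ)
    (hP : IsStochastic P)
    (hlam : ∀ i, 0 < lam i) (hT : IsUnit T)
    (hdiag : P = T * Matrix.diagonal lam * T⁻¹)
    (hH : H = T * Matrix.diagonal (fun i => Real.log (lam i)) * T⁻¹) :
    H *ᵥ (fun _ => (1 : ℝ)) = 0 :=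
  candidate_row_sums_zero_general P T H lam hP hT hdiag hH
end

section
/- An irreducible stochastic matrix P has at most one reversible embedding: if Q_1 and Q_2 are both reversible generator matrices with e^{Q_1} = e^{Q_2} = P, then Q_1 = Q_2. -/
open Matrix

/-- `Q` is a reversible generator matrix: a generator matrix admitting a
probability distribution satisfying detailed balance. -/
def IsReversibleGenerator {n : ℕ} (Q : Matrix (Fin n) (Fin n) ℝ) : Prop :=
  ((∀ i j, i ≠ j → 0 ≤ Q i j) ∧ ∀ i, ∑ j, Q i j = 0) ∧
  ∃ π : Fin n → ℝ, (∀ i, 0 ≤ π i) ∧ (∑ i, π i = 1) ∧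
    ∀ i j, π i * Q i j = π j * Q j i

/-!
A reversible generator `Q` with stationary distribution `π > 0` is conjugate, by `diag √π`, to a
symmetric matrix, hence diagonalizable with real spectrum. Positivity of `π` comes from
irreducibility: `π Q = 0` gives `π e^Q = π`, and a nonnegative stationary vector of an irreducible
nonnegative matrix that vanishes at one state vanishes at every state that leads to it.

If `A = W diag(λ) W⁻¹`, then `A = p(e^A)` for every polynomial `p` with `p(e^{λᵢ}) = λᵢ`.
Interpolating `log` on the spectra of `e^{Q₁} = e^{Q₂}` gives a single `p` recovering both.
-/

open Polynomial

lemma Polynomial.aeval_units_conj {R A : Type*} [CommSemiring R] [Semiring A] [Algebra R A]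
    (w : Aˣ) (x : A) (p : R[X]) : aeval (w * x * ↑w⁻¹ : A) p = w * aeval x p * ↑w⁻¹ := by
  simpa [ConjAct.units_smul_def] using
    aeval_algHom_apply (MulSemiringAction.toAlgHom R A (ConjAct.toConjAct w)) x p

namespace Matrix

variable {ι : Type*} [Fintype ι]

lemma vecMul_eq_zero_of_detailed_balance {Q : Matrix ι ι ℝ} {π : ι → ℝ}
    (hQ : ∀ i, ∑ j, Q i j = 0) (hdb : ∀ i j, π i * Q i j = π j * Q j i) : π ᵥ* Q = 0 := by
  funext j
  simp only [vecMul, dotProduct, hdb, ← Finset.mul_sum, hQ, mul_zero, Pi.zero_apply]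

lemma eq_zero_of_reflTransGen_of_vecMul_eq_self {P : Matrix ι ι ℝ} (hP : ∀ i j, 0 ≤ P i j)
    {v : ι → ℝ} (hv0 : ∀ i, 0 ≤ v i) (hv : v ᵥ* P = v) {i j : ι}
    (hij : Relation.ReflTransGen (fun a b => 0 < P a b) i j) (hj : v j = 0) : v i = 0 := by
  induction hij using Relation.ReflTransGen.head_induction_on with
  | refl => exact hj
  | @head a c hac _ hc =>
    have hsum : ∑ k, v k * P k c = 0 := (congrFun hv c).trans hc
    have hterm := (Finset.sum_eq_zero_iff_of_nonneg fun k _ => mul_nonneg (hv0 k) (hP k c)).1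
      hsum a (Finset.mem_univ a)
    exact (mul_eq_zero.1 hterm).resolve_right hac.ne'

lemma pos_of_vecMul_eq_self {P : Matrix ι ι ℝ} (hP : ∀ i j, 0 ≤ P i j) {v : ι → ℝ}
    (hv0 : ∀ i, 0 ≤ v i) (hv : v ᵥ* P = v)
    (hirr : ∀ i j, Relation.ReflTransGen (fun a b => 0 < P a b) i j) (hne : v ≠ 0) (i : ι) :
    0 < v i :=
  (hv0 i).lt_of_ne' fun hi =>
    hne (funext fun j => eq_zero_of_reflTransGen_of_vecMul_eq_self hP hv0 hv (hirr j i) hi)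

variable [DecidableEq ι]

lemma vecMul_exp_eq_self_of_vecMul_eq_zero {A : Matrix ι ι ℝ} {v : ι → ℝ} (h : v ᵥ* A = 0) :
    v ᵥ* NormedSpace.exp A = v := by
  let : NormedRing (Matrix ι ι ℝ) := Matrix.linftyOpNormedRing
  let : NormedAlgebra ℝ (Matrix ι ι ℝ) := Matrix.linftyOpNormedAlgebra
  have hterm : ∀ k : ℕ, v ᵥ* ((k.factorial⁻¹ : ℝ) • A ^ k) = if k = 0 then v else 0 := by
    rintro (_ | k)
    · simp
    · rw [vecMul_smul, pow_succ', ← vecMul_vecMul, h, zero_vecMul, smul_zero,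
        if_neg k.succ_ne_zero]
  have hsum := (NormedSpace.exp_series_hasSum_exp' (𝕂 := ℝ) A).map
    (AddMonoidHom.mk' (v ᵥ* ·) fun _ _ => vecMul_add _ _ v)
    (continuous_const.matrix_vecMul continuous_id)
  simp only [Function.comp_def, AddMonoidHom.mk'_apply, hterm] at hsum
  exact hsum.unique (hasSum_ite_eq 0 v)

lemma aeval_diagonal {R : Type*} [CommSemiring R] (v : ι → R) (p : R[X]) :
    aeval (diagonal v) p = diagonal fun i => p.eval (v i) := by
  rw [← diagonalAlgHom_apply R, aeval_algHom_apply, aeval_pi_apply]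
  simp

def IsRealDiagonalizable (A : Matrix ι ι ℝ) : Prop :=
  ∃ (w : (Matrix ι ι ℝ)ˣ) (e : ι → ℝ), A = w * diagonal e * w⁻¹

lemma IsRealDiagonalizable.of_units_conj {A : Matrix ι ι ℝ} (u : (Matrix ι ι ℝ)ˣ)
    (h : IsRealDiagonalizable (u * A * u⁻¹ : Matrix ι ι ℝ)) : A.IsRealDiagonalizable := by
  obtain ⟨w, e, hw⟩ := h
  refine ⟨u⁻¹ * w, e, ?_⟩
  calc A = ↑u⁻¹ * (u * A * ↑u⁻¹) * u := by simp [mul_assoc]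
    _ = _ := by rw [hw]; simp [mul_assoc]

lemma IsHermitian.isRealDiagonalizable {S : Matrix ι ι ℝ} (hS : S.IsHermitian) :
    S.IsRealDiagonalizable := by
  refine ⟨Unitary.toUnits hS.eigenvectorUnitary, hS.eigenvalues, ?_⟩
  conv_lhs => rw [hS.spectral_theorem]
  simp [Unitary.conjStarAlgAut_apply]

lemma isHermitian_of_detailed_balance {Q : Matrix ι ι ℝ} {π : ι → ℝ} (hπ : ∀ i, 0 < π i)
    (hdb : ∀ i j, π i * Q i j = π j * Q j i) :
    (diagonal (fun i => √(π i)) * Q * diagonal (fun i => (√(π i))⁻¹)).IsHermitian := by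
  ext i j
  have hi := Real.sqrt_pos.2 (hπ i)
  have hj := Real.sqrt_pos.2 (hπ j)
  simp only [conjTranspose_apply, mul_diagonal, diagonal_mul, star_trivial]
  field_simp
  rw [Real.sq_sqrt (hπ i).le, Real.sq_sqrt (hπ j).le]
  exact (hdb i j).symm

lemma IsRealDiagonalizable.aeval_exp {A : Matrix ι ι ℝ} (w : (Matrix ι ι ℝ)ˣ) (e : ι → ℝ)
    (hA : A = w * diagonal e * w⁻¹) (p : ℝ[X]) (hp : ∀ i, p.eval (Real.exp (e i)) = e i) :
    aeval (NormedSpace.exp A) p = A := by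
  have hexp : NormedSpace.exp A = w * diagonal (fun i => Real.exp (e i)) * w⁻¹ := by
    rw [hA, exp_units_conj, exp_diagonal, Pi.exp_def, Real.exp_eq_exp_ℝ]
  rw [hexp, aeval_units_conj, aeval_diagonal, hA]
  simp only [hp]

theorem exp_injOn_isRealDiagonalizable :
    Set.InjOn NormedSpace.exp {A : Matrix ι ι ℝ | A.IsRealDiagonalizable} := by
  rintro A ⟨w₁, e₁, hA⟩ B ⟨w₂, e₂, hB⟩ hAB
  let s : Finset ℝ := Finset.univ.image (Real.exp ∘ e₁) ∪ Finset.univ.image (Real.exp ∘ e₂)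
  let p := Lagrange.interpolate s id Real.log
  have hp : ∀ x ∈ s, p.eval x = Real.log x := fun x hx =>
    Lagrange.eval_interpolate_at_node Real.log (Set.injOn_id _) hx
  calc A = aeval (NormedSpace.exp A) p :=
        (IsRealDiagonalizable.aeval_exp w₁ e₁ hA p fun i => by
          rw [hp _ (by simp [s]), Real.log_exp]).symm
    _ = aeval (NormedSpace.exp B) p := by rw [hAB]
    _ = B := IsRealDiagonalizable.aeval_exp w₂ e₂ hB p fun i => by
          rw [hp _ (by simp [s]), Real.log_exp]

end Matrix

lemma IsReversibleGenerator.isRealDiagonalizable {n : ℕ} {P Q : Matrix (Fin n) (Fin n) ℝ}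
    (hQ : IsReversibleGenerator Q) (hP : ∀ i j, 0 ≤ P i j) (hPirr : IsIrreducibleStochastic P)
    (hPQ : NormedSpace.exp Q = P) : Q.IsRealDiagonalizable := by
  obtain ⟨⟨-, hrow⟩, π, hπ0, hπ1, hdb⟩ := hQ
  have hπP : π ᵥ* P = π :=
    hPQ ▸ vecMul_exp_eq_self_of_vecMul_eq_zero (vecMul_eq_zero_of_detailed_balance hrow hdb)
  have hπne : π ≠ 0 := by
    rintro rfl
    simp at hπ1
  have hπpos := pos_of_vecMul_eq_self hP hπ0 hπP hPirr hπne
  have hd : ∀ i, √(π i) ≠ 0 := fun i => (Real.sqrt_pos.2 (hπpos i)).ne'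
  let u : (Matrix (Fin n) (Fin n) ℝ)ˣ :=
    ⟨diagonal fun i => √(π i), diagonal fun i => (√(π i))⁻¹, by simp [hd], by simp [hd]⟩
  exact .of_units_conj u (isHermitian_of_detailed_balance hπpos hdb).isRealDiagonalizable

theorem reversible_embedding_unique {n : ℕ}
    (P Q₁ Q₂ : Matrix (Fin n) (Fin n) ℝ)
    (hP : IsStochastic P) (hPirr : IsIrreducibleStochastic P)
    (hQ₁ : IsReversibleGenerator Q₁) (hQ₂ : IsReversibleGenerator Q₂)
    (hPQ₁ : NormedSpace.exp Q₁ = P) (hPQ₂ : NormedSpace.exp Q₂ = P) :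
    Q₁ = Q₂ :=
  exp_injOn_isRealDiagonalizable (hQ₁.isRealDiagonalizable hP.1 hPirr hPQ₁)
    (hQ₂.isRealDiagonalizable hP.1 hPirr hPQ₂) (hPQ₁.trans hPQ₂.symm)
end

section
/- Let P be a 3×3 irreducible stochastic matrix whose eigenvalues are 1, λ, λ (a repeated eigenvalue). Then P is reversibly embeddable if and only if P is reversible and λ > 0. Moreover, in that case the reversible embedding is H = k_1(P − I) with k_1 = (log λ)/(λ − 1) > 0. -/
open Matrix Polynomial

/-!
Write `D = diagonal μ`. Reversibility of `M` with respect to `μ` is the intertwining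
`D * M = Mᵀ * D`; it passes from `Q` to `exp Q`, and it makes `M` self-adjoint for the form
`x ⬝ᵥ D *ᵥ y`. Hence a reversible `P` is diagonalisable and the Cayley–Hamilton identity
`(P - 1)(P - λ)² = 0` improves to `(P - 1)(P - λ) = 0`, so `E = (P - 1) / (λ - 1)` is idempotent
and `exp (log λ • E) = 1 + (λ - 1) • E = P`; here `λ < 1` because `tr P = 1 + 2λ < 3`.
Conversely, if `P = exp Q` with `Q` reversible for `π`, then `P` is reversible for `π`, so `π` is
stationary and equals `μ` by irreducibility. Finally `P = R * R` with `R = exp (Q / 2)` invertible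
and self-adjoint, so an eigenvector `v` of `P` gives `λ ‖v‖²_μ = ‖R v‖²_μ > 0`.
-/

open NormedSpace

section NormedAlgebra

variable {𝔸 : Type*} [NormedRing 𝔸] [NormedAlgebra ℝ 𝔸] [CompleteSpace 𝔸]

theorem IsIdempotentElem.exp_smul {E : 𝔸} (hE : IsIdempotentElem E) (c : ℝ) :
    exp (c • E) = 1 + (Real.exp c - 1) • E := by
  let := NormedAlgebra.restrictScalars ℚ ℝ 𝔸
  have hE' : SemiconjBy E (c • E) (algebraMap ℝ 𝔸 c) := by
    rw [SemiconjBy, mul_smul_comm, hE.eq, Algebra.smul_def]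
  have hF : SemiconjBy (1 - E) (c • E) 0 := by
    rw [SemiconjBy, zero_mul, mul_smul_comm, sub_mul, one_mul, hE.eq, sub_self, smul_zero]
  have h₁ : E * exp (c • E) = Real.exp c • E := by
    rw [hE'.exp_right, ← algebraMap_exp_comm, Algebra.smul_def, Real.exp_eq_exp_ℝ]
  have h₂ : (1 - E) * exp (c • E) = 1 - E := by
    rw [hF.exp_right, exp_zero, one_mul]
  calc exp (c • E) = E * exp (c • E) + (1 - E) * exp (c • E) := by
        rw [← add_mul, add_sub_cancel, one_mul]
    _ = 1 + (Real.exp c - 1) • E := by rw [h₁, h₂, sub_smul, one_smul]; abel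

theorem exp_smul_sub_one_eq_self {x : 𝔸} {lam : ℝ} (hlam : 0 < lam) (hlam1 : lam ≠ 1)
    (hx : (x - 1) * (x - algebraMap ℝ 𝔸 lam) = 0) :
    exp ((Real.log lam / (lam - 1)) • (x - 1)) = x := by
  have hne : lam - 1 ≠ 0 := sub_ne_zero.2 hlam1
  have hsq : (x - 1) * (x - 1) = (lam - 1) • (x - 1) := by
    rw [← sub_eq_zero, ← hx, sub_smul, one_smul, Algebra.smul_def, Algebra.commutes]
    noncomm_ring
  have hE : IsIdempotentElem ((lam - 1)⁻¹ • (x - 1)) := by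
    rw [IsIdempotentElem, smul_mul_smul_comm, hsq, smul_smul, mul_assoc, inv_mul_cancel₀ hne,
      mul_one]
  rw [div_eq_mul_inv, mul_smul, hE.exp_smul, Real.exp_log hlam, smul_smul,
    mul_inv_cancel₀ hne, one_smul, add_sub_cancel]

end NormedAlgebra

section Reversible

variable {ι : Type*} [Fintype ι] [DecidableEq ι]

theorem semiconjBy_diagonal_transpose_iff {R : Type*} [CommRing R] {μ : ι → R}
    {M : Matrix ι ι R} : SemiconjBy (diagonal μ) M Mᵀ ↔ ∀ i j, μ i * M i j = μ j * M j i := by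
  simp only [SemiconjBy, ← Matrix.ext_iff, diagonal_mul, mul_diagonal, transpose_apply,
    mul_comm (M _ _) (μ _)]

theorem eq_zero_of_semiconjBy_diagonal_of_mul_self_eq_zero {μ : ι → ℝ} (hμ : ∀ i, 0 < μ i)
    {A : Matrix ι ι ℝ} (hA : SemiconjBy (diagonal μ) A Aᵀ) (hAA : A * A = 0) : A = 0 := by
  have h : Aᵀ * diagonal μ * A = 0 := by rw [← hA.eq, mul_assoc, hAA, mul_zero]
  ext i j
  have hj : ∑ k, μ k * A k j ^ 2 = 0 := by
    have := congrFun (congrFun h j) j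
    simp only [mul_apply, transpose_apply, diagonal_apply, mul_ite, mul_zero,
      Finset.sum_ite_eq', Finset.mem_univ, if_true, Matrix.zero_apply] at this
    rw [← this]
    exact Finset.sum_congr rfl fun k _ => by ring
  have hij := (Finset.sum_eq_zero_iff_of_nonneg fun k _ =>
    mul_nonneg (hμ k).le (sq_nonneg (A k j))).1 hj i (Finset.mem_univ i)
  simpa [(hμ i).ne'] using hij

theorem sub_mul_sub_eq_zero_of_semiconjBy_diagonal {μ : ι → ℝ} (hμ : ∀ i, 0 < μ i)
    {M : Matrix ι ι ℝ} (hM : SemiconjBy (diagonal μ) M Mᵀ) {a b : ℝ}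
    (h : (M - algebraMap ℝ _ a) * (M - algebraMap ℝ _ b) ^ 2 = 0) :
    (M - algebraMap ℝ _ a) * (M - algebraMap ℝ _ b) = 0 := by
  have hshift (c : ℝ) :
      SemiconjBy (diagonal μ) (M - algebraMap ℝ _ c) (M - algebraMap ℝ _ c)ᵀ := by
    rw [transpose_sub, algebraMap_eq_diagonal, diagonal_transpose]
    exact hM.sub_right (Algebra.commute_algebraMap_right c _)
  have hcomm : Commute (M - algebraMap ℝ _ a) (M - algebraMap ℝ _ b) :=
    ((Commute.refl M).sub_right (Algebra.commute_algebraMap_right b M)).sub_left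
      (Algebra.commute_algebraMap_left a _)
  refine eq_zero_of_semiconjBy_diagonal_of_mul_self_eq_zero hμ ?_ ?_
  · have := (hshift a).mul_right (hshift b)
    rwa [← transpose_mul, ← hcomm.eq] at this
  · calc _ = (M - algebraMap ℝ _ a) * ((M - algebraMap ℝ _ a) * (M - algebraMap ℝ _ b) ^ 2) := by
          rw [sq, mul_assoc, ← mul_assoc (M - algebraMap ℝ _ b), ← hcomm.eq]
          simp only [mul_assoc]
      _ = 0 := by rw [h, mul_zero]

theorem exists_mulVec_eq_smul_of_isRoot_charpoly {K : Type*} [Field K] {M : Matrix ι ι K}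
    {lam : K} (h : M.charpoly.IsRoot lam) : ∃ v ≠ 0, M *ᵥ v = lam • v := by
  rw [← charpoly_toLin', ← Module.End.hasEigenvalue_iff_isRoot_charpoly] at h
  obtain ⟨v, hv⟩ := h.exists_hasEigenvector
  exact ⟨v, hv.2, by simpa using hv.apply_eq_smul⟩

theorem trace_eq_one_add_two_mul_of_charpoly_eq {R : Type*} [CommRing R] {M : Matrix ι ι R}
    {lam : R} (h : M.charpoly = (X - C 1) * (X - C lam) ^ 2) : M.trace = 1 + 2 * lam := by
  rw [trace_eq_neg_charpoly_nextCoeff, h,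
    (monic_X_sub_C 1).nextCoeff_mul ((monic_X_sub_C lam).pow 2),
    (monic_X_sub_C lam).nextCoeff_pow, nextCoeff_X_sub_C, nextCoeff_X_sub_C, two_nsmul]
  ring

attribute [local instance] Matrix.linftyOpNormedRing Matrix.linftyOpNormedAlgebra

theorem semiconjBy_diagonal_exp {μ : ι → ℝ} {Q : Matrix ι ι ℝ}
    (hQ : SemiconjBy (diagonal μ) Q Qᵀ) : SemiconjBy (diagonal μ) (exp Q) (exp Q)ᵀ := by
  rw [← exp_transpose]
  exact hQ.exp_right

theorem pos_of_exp_mulVec_eq_smul {μ : ι → ℝ} (hμ : ∀ i, 0 < μ i) {Q : Matrix ι ι ℝ}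
    (hQ : SemiconjBy (diagonal μ) Q Qᵀ) {v : ι → ℝ} (hv : v ≠ 0) {lam : ℝ}
    (h : exp Q *ᵥ v = lam • v) : 0 < lam := by
  set R := exp ((1 / 2 : ℝ) • Q)
  have hRR : R * R = exp Q := by
    rw [← Matrix.exp_add_of_commute _ _ (Commute.refl _), ← add_smul, add_halves, one_smul]
  have hR : SemiconjBy (diagonal μ) R Rᵀ := by
    apply semiconjBy_diagonal_exp
    rw [transpose_smul]
    exact hQ.smul_right _
  have hRv : R *ᵥ v ≠ 0 := by
    have hunit : IsUnit R := Matrix.isUnit_exp _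
    exact fun h0 => hv (mulVec_injective_iff_isUnit.2 hunit (h0.trans (mulVec_zero R).symm))
  have key : lam * (v ⬝ᵥ (diagonal μ *ᵥ v)) = (R *ᵥ v) ⬝ᵥ (diagonal μ *ᵥ (R *ᵥ v)) := by
    calc lam * (v ⬝ᵥ (diagonal μ *ᵥ v)) = v ⬝ᵥ (diagonal μ *ᵥ (exp Q *ᵥ v)) := by
          rw [h, mulVec_smul, dotProduct_smul, smul_eq_mul]
      _ = v ⬝ᵥ (Rᵀ *ᵥ (diagonal μ *ᵥ (R *ᵥ v))) := by
          rw [← hRR, mulVec_mulVec, mulVec_mulVec, mulVec_mulVec, ← mul_assoc, hR.eq]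
      _ = (R *ᵥ v) ⬝ᵥ (diagonal μ *ᵥ (R *ᵥ v)) := by
          rw [dotProduct_mulVec, vecMul_transpose, dotProduct_comm]
  have hq (w : ι → ℝ) (hw : w ≠ 0) : 0 < w ⬝ᵥ (diagonal μ *ᵥ w) := by
    simpa using (posDef_diagonal_iff.2 hμ).dotProduct_mulVec_pos hw
  exact pos_of_mul_pos_left (key ▸ hq _ hRv) (hq v hv).le

theorem exp_smul_sub_one_eq_of_charpoly_eq {μ : ι → ℝ} (hμ : ∀ i, 0 < μ i) {P : Matrix ι ι ℝ}
    (hP : SemiconjBy (diagonal μ) P Pᵀ) {lam : ℝ} (hlam : 0 < lam) (hlam1 : lam ≠ 1)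
    (hchar : P.charpoly = (X - C 1) * (X - C lam) ^ 2) :
    exp ((Real.log lam / (lam - 1)) • (P - 1)) = P := by
  have hCH : (P - algebraMap ℝ _ 1) * (P - algebraMap ℝ _ lam) ^ 2 = 0 := by
    simpa [hchar] using aeval_self_charpoly P
  apply exp_smul_sub_one_eq_self hlam hlam1
  simpa using sub_mul_sub_eq_zero_of_semiconjBy_diagonal hμ hP hCH

end Reversible

section Stochastic

variable {n : ℕ} {P : Matrix (Fin n) (Fin n) ℝ}

theorem IsIrreducibleStochastic.exists_ne_pos (hirr : IsIrreducibleStochastic P) {i j : Fin n}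
    (hij : i ≠ j) : ∃ k ≠ i, 0 < P i k := by
  by_contra! h
  have hclosed (k : Fin n) (hk : Relation.ReflTransGen (fun a b => 0 < P a b) i k) : k = i := by
    induction hk with
    | refl => rfl
    | tail _ hbc ih =>
      subst ih
      by_contra hne
      exact (h _ hne).not_gt hbc
  exact hij (hclosed j (hirr i j)).symm

theorem IsIrreducibleStochastic.diag_lt_one (hirr : IsIrreducibleStochastic P)
    (hP : IsStochastic P) (hn : 1 < n) (i : Fin n) : P i i < 1 := by
  have : Nontrivial (Fin n) := Fin.nontrivial_iff_two_le.2 hn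
  obtain ⟨j, hj⟩ := exists_ne i
  obtain ⟨k, hki, hk⟩ := hirr.exists_ne_pos hj.symm
  calc P i i < P i i + P i k := lt_add_of_pos_right _ hk
    _ = ∑ l ∈ {i, k}, P i l := (Finset.sum_pair hki.symm).symm
    _ ≤ ∑ l, P i l :=
      Finset.sum_le_sum_of_subset_of_nonneg (Finset.subset_univ _) fun l _ _ => hP.1 i l
    _ = 1 := hP.2 i

theorem IsIrreducibleStochastic.trace_lt (hirr : IsIrreducibleStochastic P)
    (hP : IsStochastic P) (hn : 1 < n) : P.trace < n := by
  calc P.trace = ∑ i, P i i := rfl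
    _ < ∑ _i : Fin n, (1 : ℝ) :=
      Finset.sum_lt_sum_of_nonempty ⟨⟨0, by omega⟩, Finset.mem_univ _⟩
        fun i _ => hirr.diag_lt_one hP hn i
    _ = n := by simp

theorem IsStochastic.sum_mul_eq_of_reversible (hP : IsStochastic P) {π : Fin n → ℝ}
    (hπ : ∀ i j, π i * P i j = π j * P j i) (j : Fin n) : ∑ i, π i * P i j = π j := by
  simp_rw [hπ _ j, ← Finset.mul_sum, hP.2 j, mul_one]

theorem IsIrreducibleStochastic.eq_of_stationary (hirr : IsIrreducibleStochastic P)
    (hP : ∀ i j, 0 ≤ P i j) {μ π : Fin n → ℝ} (hμpos : ∀ i, 0 < μ i)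
    (hμ : ∀ j, ∑ i, μ i * P i j = μ j) (hπ : ∀ j, ∑ i, π i * P i j = π j)
    (hsum : ∑ i, π i = ∑ i, μ i) : π = μ := by
  rcases isEmpty_or_nonempty (Fin n) with _ | _
  · exact Subsingleton.elim _ _
  obtain ⟨i₀, hi₀⟩ := Finite.exists_min fun i => π i / μ i
  set c := π i₀ / μ i₀
  have hle (i : Fin n) : c * μ i ≤ π i := (le_div_iff₀ (hμpos i)).1 (hi₀ i)
  -- `π - c • μ` is a nonnegative stationary vector, so its zeros propagate backwards along edges.
  have hback (i j : Fin n) (hij : 0 < P i j) (hj : π j = c * μ j) : π i = c * μ i := by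
    by_contra hne
    have hlt : ∑ k, c * μ k * P k j < ∑ k, π k * P k j :=
      Finset.sum_lt_sum (fun k _ => mul_le_mul_of_nonneg_right (hle k) (hP k j))
        ⟨i, Finset.mem_univ _, mul_lt_mul_of_pos_right ((hle i).lt_of_ne (Ne.symm hne)) hij⟩
    simp_rw [mul_assoc, ← Finset.mul_sum, hμ, hπ, hj] at hlt
    exact hlt.false
  have hprop (i : Fin n) : π i = c * μ i := by
    induction hirr i i₀ using Relation.ReflTransGen.head_induction_on with
    | refl => exact (div_mul_cancel₀ _ (hμpos i₀).ne').symm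
    | head hab _ ih => exact hback _ _ hab ih
  have hc : c = 1 := by
    have hμsum : 0 < ∑ i, μ i := Finset.sum_pos (fun i _ => hμpos i) Finset.univ_nonempty
    have : c * ∑ i, μ i = ∑ i, μ i := by simp_rw [Finset.mul_sum, ← hprop, hsum]
    exact (mul_eq_right₀ hμsum.ne').1 this
  funext i
  rw [hprop, hc, one_mul]

theorem IsStochastic.isReversibleGenerator_smul_sub_one (hP : IsStochastic P) {μ : Fin n → ℝ}
    (hμ : ∀ i, 0 ≤ μ i) (hμsum : ∑ i, μ i = 1) (hrev : ∀ i j, μ i * P i j = μ j * P j i)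
    {k : ℝ} (hk : 0 ≤ k) : IsReversibleGenerator (k • (P - 1)) := by
  refine ⟨⟨fun i j hij => ?_, fun i => ?_⟩, μ, hμ, hμsum, fun i j => ?_⟩
  · simpa [one_apply_ne hij] using mul_nonneg hk (hP.1 i j)
  · simp [← Finset.mul_sum, Finset.sum_sub_distrib, hP.2 i, one_apply]
  · rcases eq_or_ne i j with rfl | hij
    · rfl
    · simp [one_apply_ne hij, one_apply_ne hij.symm, mul_left_comm _ k, hrev i j]

end Stochastic

theorem three_by_three_repeated_eigenvalue
    (P : Matrix (Fin 3) (Fin 3) ℝ) (μ : Fin 3 → ℝ) (lam : ℝ)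
    (hP : IsStochastic P) (hPirr : IsIrreducibleStochastic P)
    (hμpos : ∀ i, 0 < μ i) (hμsum : ∑ i, μ i = 1)
    (hμinv : ∀ j, ∑ i, μ i * P i j = μ j)
    (hchar : P.charpoly = (X - C 1) * (X - C lam) ^ 2) :
    ((∃ Q : Matrix (Fin 3) (Fin 3) ℝ, IsReversibleGenerator Q ∧
        NormedSpace.exp Q = P) ↔
      ((∀ i j, μ i * P i j = μ j * P j i) ∧ 0 < lam)) ∧
    ((∀ i j, μ i * P i j = μ j * P j i) → 0 < lam →
      0 < Real.log lam / (lam - 1) ∧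
      IsReversibleGenerator ((Real.log lam / (lam - 1)) • (P - 1)) ∧
      NormedSpace.exp ((Real.log lam / (lam - 1)) • (P - 1)) = P) := by
  have hlam1 : lam < 1 := by
    have := hPirr.trace_lt hP (by norm_num)
    rw [trace_eq_one_add_two_mul_of_charpoly_eq hchar] at this
    push_cast at this
    linarith
  have hembed (hrev : ∀ i j, μ i * P i j = μ j * P j i) (hlam : 0 < lam) :
      0 < Real.log lam / (lam - 1) ∧
      IsReversibleGenerator ((Real.log lam / (lam - 1)) • (P - 1)) ∧
      NormedSpace.exp ((Real.log lam / (lam - 1)) • (P - 1)) = P := by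
    have hk := div_pos_of_neg_of_neg (Real.log_neg hlam hlam1) (sub_neg.2 hlam1)
    exact ⟨hk, hP.isReversibleGenerator_smul_sub_one (fun i => (hμpos i).le) hμsum hrev hk.le,
      exp_smul_sub_one_eq_of_charpoly_eq hμpos (semiconjBy_diagonal_transpose_iff.2 hrev) hlam
        hlam1.ne hchar⟩
  refine ⟨⟨?_, fun ⟨hrev, hlam⟩ => ⟨_, (hembed hrev hlam).2⟩⟩, hembed⟩
  rintro ⟨Q, ⟨-, π, -, hπsum, hπQ⟩, rfl⟩
  have hQ := semiconjBy_diagonal_transpose_iff.2 hπQ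
  have hπP := semiconjBy_diagonal_transpose_iff.1 (semiconjBy_diagonal_exp hQ)
  obtain rfl : π = μ := hPirr.eq_of_stationary hP.1 hμpos hμinv
    (hP.sum_mul_eq_of_reversible hπP) (hπsum.trans hμsum.symm)
  have hroot : (exp Q).charpoly.IsRoot lam := by simp [hchar]
  obtain ⟨v, hv, hQv⟩ := exists_mulVec_eq_smul_of_isRoot_charpoly hroot
  exact ⟨hπP, pos_of_exp_mulVec_eq_smul hμpos hQ hv hQv⟩
end

section
/- Let P be an irreducible stochastic matrix. Then P is reversibly embeddable if and only if: (i) P is reversible with respect to its invariant distribution and all eigenvalues of P are positive, and (ii) for the unique solution k_0,…,k_{m−1} of the interpolation system k_0 + k_1 γ_i + ⋯ + k_{m−1} γ_i^{m−1} = log γ_i over the distinct eigenvalues γ_1,…,γ_m of P, the off-diagonal entries of k_1 P + k_2 P² + ⋯ + k_{m−1} P^{m−1} are all nonnegative. -/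
open Matrix



lemma stoch_pow_row_sum {n : ℕ} {P : Matrix (Fin n) (Fin n) ℝ}
    (h : ∀ i, ∑ j, P i j = 1) (t : ℕ) : ∀ i, ∑ j, (P ^ t) i j = 1 := by
  induction t with
  | zero => intro i; simp [Matrix.one_apply]
  | succ t ih =>
    intro i
    rw [pow_succ]
    simp only [Matrix.mul_apply]
    rw [Finset.sum_comm]
    calc ∑ l, ∑ j, (P ^ t) i l * P l j = ∑ l, (P ^ t) i l * ∑ j, P l j := by
          simp [Finset.mul_sum]
      _ = 1 := by simp [h, ih i]

lemma rev_pow {n : ℕ} {P : Matrix (Fin n) (Fin n) ℝ} {μ : Fin n → ℝ}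
    (h : ∀ i j, μ i * P i j = μ j * P j i) (t : ℕ) :
    ∀ i j, μ i * (P ^ t) i j = μ j * (P ^ t) j i := by
  induction t with
  | zero =>
    intro i j
    by_cases hij : i = j
    · subst hij; rfl
    · simp [Matrix.one_apply_ne, hij, Ne.symm hij]
  | succ t ih =>
    intro i j
    conv_lhs => rw [pow_succ]
    conv_rhs => rw [pow_succ']
    simp only [Matrix.mul_apply, Finset.mul_sum]
    refine Finset.sum_congr rfl fun l _ => ?_
    calc μ i * ((P ^ t) i l * P l j) = (μ i * (P ^ t) i l) * P l j := by ring
      _ = (μ l * (P ^ t) l i) * P l j := by rw [ih]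
      _ = (P ^ t) l i * (μ l * P l j) := by ring
      _ = (P ^ t) l i * (μ j * P j l) := by rw [h]
      _ = μ j * (P j l * (P ^ t) l i) := by ring


lemma inv_zero_propagate {n : ℕ} {P : Matrix (Fin n) (Fin n) ℝ}
    (hP0 : ∀ i j, 0 ≤ P i j)
    (hirr : ∀ i j : Fin n, Relation.ReflTransGen (fun a b => 0 < P a b) i j)
    {w : Fin n → ℝ} (hw0 : ∀ i, 0 ≤ w i) (hwinv : ∀ j, ∑ i, w i * P i j = w j)
    {i0 : Fin n} (h0 : w i0 = 0) : ∀ j, w j = 0 := by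
  intro j
  refine Relation.ReflTransGen.head_induction_on (hirr j i0) h0 ?_
  intro a c hac _ hc
  have hsum : ∑ i, w i * P i c = 0 := by rw [hwinv c, hc]
  have hterm := (Finset.sum_eq_zero_iff_of_nonneg
    (fun i _ => mul_nonneg (hw0 i) (hP0 i c))).mp hsum a (Finset.mem_univ a)
  rcases mul_eq_zero.mp hterm with h | h
  · exact h
  · exact absurd h (ne_of_gt hac)

lemma invariant_unique {n : ℕ} {P : Matrix (Fin n) (Fin n) ℝ} {μ π : Fin n → ℝ}
    (hP0 : ∀ i j, 0 ≤ P i j)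
    (hirr : ∀ i j : Fin n, Relation.ReflTransGen (fun a b => 0 < P a b) i j)
    (hn : 0 < n)
    (hμpos : ∀ i, 0 < μ i) (hμsum : ∑ i, μ i = 1)
    (hπ0 : ∀ i, 0 ≤ π i) (hπsum : ∑ i, π i = 1)
    (hπinv : ∀ j, ∑ i, π i * P i j = π j)
    (hμinv : ∀ j, ∑ i, μ i * P i j = μ j) : ∀ i, π i = μ i := by
  obtain ⟨i0, -, hmin⟩ := Finset.exists_min_image Finset.univ (fun i => π i / μ i)
    ⟨⟨0, hn⟩, Finset.mem_univ _⟩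
  set c := π i0 / μ i0 with hc
  have hw0 : ∀ i, 0 ≤ π i - c * μ i := by
    intro i
    have h1 : c ≤ π i / μ i := hmin i (Finset.mem_univ i)
    have h2 : c * μ i ≤ π i := by
      rw [le_div_iff₀ (hμpos i)] at h1; linarith
    linarith
  have hwinv : ∀ j, ∑ i, (π i - c * μ i) * P i j = π j - c * μ j := by
    intro j
    have : ∑ i, (π i - c * μ i) * P i j
        = (∑ i, π i * P i j) - c * ∑ i, μ i * P i j := by
      rw [Finset.mul_sum, ← Finset.sum_sub_distrib]
      exact Finset.sum_congr rfl fun i _ => by ring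
    rw [this, hπinv j, hμinv j]
  have h00 : π i0 - c * μ i0 = 0 := by
    rw [hc, div_mul_cancel₀ _ (ne_of_gt (hμpos i0)), sub_self]
  have hall := inv_zero_propagate hP0 hirr hw0 hwinv h00
  have hcsum : ∑ i, (π i - c * μ i) = 0 := Finset.sum_eq_zero fun i _ => hall i
  rw [Finset.sum_sub_distrib, hπsum, ← Finset.mul_sum, hμsum, mul_one] at hcsum
  have hc1 : c = 1 := by linarith
  intro i
  have := hall i
  rw [hc1, one_mul] at this
  linarith


/-- A matrix reversible w.r.t. a positive weight is real-diagonalizable. -/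
lemma rev_diag {n : ℕ} {M : Matrix (Fin n) (Fin n) ℝ} {μ : Fin n → ℝ}
    (hμpos : ∀ i, 0 < μ i) (hrev : ∀ i j, μ i * M i j = μ j * M j i) :
    ∃ (T : (Matrix (Fin n) (Fin n) ℝ)ˣ) (d : Fin n → ℝ),
      M = (T : Matrix (Fin n) (Fin n) ℝ) * Matrix.diagonal d * (↑T⁻¹ : Matrix (Fin n) (Fin n) ℝ) := by
  set a : Fin n → ℝ := fun i => Real.sqrt (μ i) with ha
  have hapos : ∀ i, 0 < a i := fun i => Real.sqrt_pos.mpr (hμpos i)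
  have haa : ∀ i, a i * a i = μ i := fun i => Real.mul_self_sqrt (le_of_lt (hμpos i))
  set uD : (Matrix (Fin n) (Fin n) ℝ)ˣ :=
    { val := Matrix.diagonal a
      inv := Matrix.diagonal fun i => (a i)⁻¹
      val_inv := by
        rw [diagonal_mul_diagonal]
        convert Matrix.diagonal_one
        exact mul_inv_cancel₀ (ne_of_gt (hapos _))
      inv_val := by
        rw [diagonal_mul_diagonal]
        convert Matrix.diagonal_one
        exact inv_mul_cancel₀ (ne_of_gt (hapos _)) } with huD
  have hAentry : ∀ i j, ((uD : Matrix (Fin n) (Fin n) ℝ) * M * (↑uD⁻¹ : Matrix (Fin n) (Fin n) ℝ)) i j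
      = a i * M i j * (a j)⁻¹ := by
    intro i j
    show ((Matrix.diagonal a * M) * Matrix.diagonal fun i => (a i)⁻¹) i j = _
    rw [Matrix.mul_diagonal, Matrix.diagonal_mul]
  have hAherm : ((uD : Matrix (Fin n) (Fin n) ℝ) * M * (↑uD⁻¹ : Matrix (Fin n) (Fin n) ℝ)).IsHermitian := by
    refine Matrix.ext fun i j => ?_
    show star (((uD : Matrix (Fin n) (Fin n) ℝ) * M * (↑uD⁻¹ : Matrix (Fin n) (Fin n) ℝ)) j i) = ((uD : Matrix (Fin n) (Fin n) ℝ) * M * (↑uD⁻¹ : Matrix (Fin n) (Fin n) ℝ)) i j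
    rw [star_trivial, hAentry, hAentry]
    have hi := hapos i
    have hj := hapos j
    have key : a j * M j i * a j = a i * M i j * a i := by
      calc a j * M j i * a j = μ j * M j i := by rw [← haa j]; ring
        _ = μ i * M i j := (hrev i j).symm
        _ = a i * M i j * a i := by rw [← haa i]; ring
    field_simp
    linear_combination key
  set uU : (Matrix (Fin n) (Fin n) ℝ)ˣ := Unitary.toUnits (hAherm.eigenvectorUnitary) with huU
  have hAdiag : (uD : Matrix (Fin n) (Fin n) ℝ) * M * (↑uD⁻¹ : Matrix (Fin n) (Fin n) ℝ)
      = (uU : Matrix (Fin n) (Fin n) ℝ) * Matrix.diagonal (RCLike.ofReal ∘ hAherm.eigenvalues) * (↑uU⁻¹ : Matrix (Fin n) (Fin n) ℝ) := by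
    exact hAherm.spectral_theorem.trans rfl
  refine ⟨uD⁻¹ * uU, RCLike.ofReal ∘ hAherm.eigenvalues, ?_⟩
  have hM : M = (↑uD⁻¹ : Matrix (Fin n) (Fin n) ℝ) * ((uD : Matrix (Fin n) (Fin n) ℝ) * M * (↑uD⁻¹ : Matrix (Fin n) (Fin n) ℝ)) * (uD : Matrix (Fin n) (Fin n) ℝ) := by
    calc M = ((↑uD⁻¹ : Matrix (Fin n) (Fin n) ℝ) * ↑uD) * M * ((↑uD⁻¹ : Matrix (Fin n) (Fin n) ℝ) * ↑uD) := by
          rw [Units.inv_mul, one_mul, mul_one]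
      _ = _ := by noncomm_ring
  conv_lhs => rw [hM, hAdiag]
  simp only [Units.val_mul, _root_.mul_inv_rev, inv_inv]
  noncomm_ring


lemma spectrum_conj_diag {n : ℕ} (T : (Matrix (Fin n) (Fin n) ℝ)ˣ) (d : Fin n → ℝ) :
    spectrum ℂ (((T : Matrix (Fin n) (Fin n) ℝ) * Matrix.diagonal d * (↑T⁻¹ : Matrix (Fin n) (Fin n) ℝ)).map Complex.ofReal)
      = Set.range (fun i => (d i : ℂ)) := by
  set φ : Matrix (Fin n) (Fin n) ℝ →+* Matrix (Fin n) (Fin n) ℂ :=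
    (algebraMap ℝ ℂ).mapMatrix with hφ
  have hmap : ∀ M : Matrix (Fin n) (Fin n) ℝ, M.map Complex.ofReal = φ M := fun M => rfl
  set u : (Matrix (Fin n) (Fin n) ℂ)ˣ := Units.map φ.toMonoidHom T with hu
  have hTc : φ (T : Matrix (Fin n) (Fin n) ℝ) = (u : Matrix (Fin n) (Fin n) ℂ) := rfl
  have hTinv : φ (↑T⁻¹ : Matrix (Fin n) (Fin n) ℝ) = (↑u⁻¹ : Matrix (Fin n) (Fin n) ℂ) := by
    rw [hu, Units.coe_map_inv]
    rfl
  have hdiag : φ (Matrix.diagonal d) = Matrix.diagonal (fun i => (d i : ℂ)) := by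
    rw [show φ (Matrix.diagonal d) = (Matrix.diagonal d).map (algebraMap ℝ ℂ) from rfl,
      Matrix.diagonal_map (map_zero _)]
    rfl
  rw [hmap, _root_.map_mul, _root_.map_mul, hTc, hTinv, hdiag,
    spectrum.units_conjugate, spectrum_diagonal]


lemma conj_sum_smul_pow {n m : ℕ} (T : (Matrix (Fin n) (Fin n) ℝ)ˣ) (d : Fin n → ℝ)
    (k : Fin m → ℝ) :
    ∑ j : Fin m, k j • ((T : Matrix (Fin n) (Fin n) ℝ) * Matrix.diagonal d * (↑T⁻¹ : Matrix (Fin n) (Fin n) ℝ)) ^ (j : ℕ)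
      = (T : Matrix (Fin n) (Fin n) ℝ) * Matrix.diagonal (fun i => ∑ j : Fin m, k j * d i ^ (j : ℕ)) * (↑T⁻¹ : Matrix (Fin n) (Fin n) ℝ) := by
  have h1 : ∀ j : Fin m, k j • ((T : Matrix (Fin n) (Fin n) ℝ) * Matrix.diagonal d * (↑T⁻¹ : Matrix (Fin n) (Fin n) ℝ)) ^ (j : ℕ)
      = (T : Matrix (Fin n) (Fin n) ℝ) * (k j • Matrix.diagonal (fun i => d i ^ (j : ℕ))) * (↑T⁻¹ : Matrix (Fin n) (Fin n) ℝ) := by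
    intro j
    rw [Units.conj_pow, Matrix.diagonal_pow]
    rw [mul_smul_comm, smul_mul_assoc]
    rfl
  simp_rw [h1]
  rw [← Finset.sum_mul, ← Finset.mul_sum]
  congr 2
  ext a b
  rw [Matrix.sum_apply]
  by_cases hab : a = b
  · subst hab
    simp [Matrix.diagonal_apply_eq, Finset.mul_sum]
  · simp [Matrix.diagonal_apply_ne _ hab]


lemma exp_entry_hasSum {n : ℕ} (Q : Matrix (Fin n) (Fin n) ℝ) (i j : Fin n) :
    HasSum (fun t : ℕ => ((t.factorial : ℝ))⁻¹ * (Q ^ t) i j)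
      ((NormedSpace.exp Q) i j) := by
  letI : SeminormedRing (Matrix (Fin n) (Fin n) ℝ) := Matrix.linftyOpSemiNormedRing
  letI : NormedRing (Matrix (Fin n) (Fin n) ℝ) := Matrix.linftyOpNormedRing
  letI : NormedAlgebra ℝ (Matrix (Fin n) (Fin n) ℝ) := Matrix.linftyOpNormedAlgebra
  have h : HasSum (fun t : ℕ => ((t.factorial : ℝ))⁻¹ • Q ^ t) (NormedSpace.exp Q) := by
    rw [NormedSpace.exp_eq_tsum ℝ]
    exact (NormedSpace.expSeries_summable' (𝕂 := ℝ) Q).hasSum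
  have h2 := Pi.hasSum.mp (Pi.hasSum.mp h i) j
  simpa using h2


lemma one_mem_spec {n : ℕ} (hn : 0 < n) {P : Matrix (Fin n) (Fin n) ℝ}
    (hrow : ∀ i, ∑ j, P i j = 1) :
    (1 : ℂ) ∈ spectrum ℂ (P.map Complex.ofReal) := by
  rw [spectrum.mem_iff, _root_.map_one]
  intro hunit
  rw [Matrix.isUnit_iff_isUnit_det] at hunit
  have hdet : ((1 : Matrix (Fin n) (Fin n) ℂ) - P.map Complex.ofReal).det = 0 := by
    rw [← Matrix.exists_mulVec_eq_zero_iff]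
    refine ⟨fun _ => 1, ?_, ?_⟩
    · intro h
      have := congr_fun h ⟨0, hn⟩
      simp at this
    · funext i
      show ∑ j, ((1 : Matrix (Fin n) (Fin n) ℂ) - P.map Complex.ofReal) i j * 1 = 0
      simp only [mul_one, Matrix.sub_apply, Matrix.map_apply]
      rw [Finset.sum_sub_distrib]
      have h1 : ∑ j, (1 : Matrix (Fin n) (Fin n) ℂ) i j = 1 := by
        simp [Matrix.one_apply]
      have h2 : ∑ j, (Complex.ofReal (P i j)) = 1 := by
        rw [← Complex.ofReal_sum, hrow i, Complex.ofReal_one]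
      rw [h1, h2, sub_self]
  rw [hdet] at hunit
  simp at hunit


theorem reversible_embeddability_criterion {n : ℕ}
    (P : Matrix (Fin n) (Fin n) ℝ) (μ : Fin n → ℝ)
    (hP : IsStochastic P) (hPirr : IsIrreducibleStochastic P)
    (hμpos : ∀ i, 0 < μ i) (hμsum : ∑ i, μ i = 1)
    (hμinv : ∀ j, ∑ i, μ i * P i j = μ j) :
    (∃ Q : Matrix (Fin n) (Fin n) ℝ, IsReversibleGenerator Q ∧
        NormedSpace.exp Q = P) ↔
    ((∀ i j, μ i * P i j = μ j * P j i) ∧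
      (∀ z ∈ spectrum ℂ (P.map Complex.ofReal), z.im = 0 ∧ 0 < z.re) ∧
      ∃ (m : ℕ) (γ : Fin m → ℝ) (k : Fin m → ℝ),
        Function.Injective γ ∧
        (∀ j, ((γ j : ℝ) : ℂ) ∈ spectrum ℂ (P.map Complex.ofReal)) ∧
        (∀ z ∈ spectrum ℂ (P.map Complex.ofReal), ∃ j, ((γ j : ℝ) : ℂ) = z) ∧
        (∀ i, ∑ j, k j * γ i ^ (j : ℕ) = Real.log (γ i)) ∧
        (∀ a b, a ≠ b → 0 ≤ (∑ j : Fin m, k j • P ^ (j : ℕ)) a b)) := by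
  have hn : 0 < n := by
    rcases Nat.eq_zero_or_pos n with h | h
    · subst h; simp at hμsum
    · exact h
  constructor
  · rintro ⟨Q, ⟨⟨hQoff, hQrow⟩, π, hπ0, hπsum, hπdb⟩, hexp⟩
    -- detailed balance of P w.r.t. π
    have hπP : ∀ i j, π i * P i j = π j * P j i := by
      intro i j
      have h1 := (exp_entry_hasSum Q i j).mul_left (π i)
      have h2 := (exp_entry_hasSum Q j i).mul_left (π j)
      rw [hexp] at h1 h2
      have heq : (fun t : ℕ => π i * (((t.factorial : ℝ))⁻¹ * (Q ^ t) i j))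
          = fun t : ℕ => π j * (((t.factorial : ℝ))⁻¹ * (Q ^ t) j i) := by
        funext t
        calc π i * (((t.factorial : ℝ))⁻¹ * (Q ^ t) i j)
            = ((t.factorial : ℝ))⁻¹ * (π i * (Q ^ t) i j) := by ring
          _ = ((t.factorial : ℝ))⁻¹ * (π j * (Q ^ t) j i) := by rw [rev_pow hπdb t i j]
          _ = π j * (((t.factorial : ℝ))⁻¹ * (Q ^ t) j i) := by ring
      exact h1.unique (heq ▸ h2)
    have hπinv : ∀ jj, ∑ i, π i * P i jj = π jj := by
      intro jj
      calc ∑ i, π i * P i jj = ∑ i, π jj * P jj i :=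
            Finset.sum_congr rfl fun i _ => hπP i jj
        _ = π jj := by rw [← Finset.mul_sum, hP.2 jj, mul_one]
    have hπμ := invariant_unique hP.1 hPirr hn hμpos hμsum hπ0 hπsum hπinv hμinv
    have hrevP : ∀ i j, μ i * P i j = μ j * P j i := fun i j => by
      rw [← hπμ i, ← hπμ j]; exact hπP i j
    have hrevQ : ∀ i j, μ i * Q i j = μ j * Q j i := fun i j => by
      rw [← hπμ i, ← hπμ j]; exact hπdb i j
    obtain ⟨T, lam, hQdiag⟩ := rev_diag hμpos hrevQ
    set d' : Fin n → ℝ := fun i => Real.exp (lam i) with hd'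
    have hPdiag : P = (T : Matrix (Fin n) (Fin n) ℝ) * Matrix.diagonal d' * (↑T⁻¹ : Matrix (Fin n) (Fin n) ℝ) := by
      rw [← hexp, hQdiag, Matrix.exp_units_conj, Matrix.exp_diagonal]
      congr 2
      rw [Pi.exp_def]
      funext i
      rw [hd', ← Real.exp_eq_exp_ℝ]
    have hspec : spectrum ℂ (P.map Complex.ofReal) = Set.range (fun i => (d' i : ℂ)) := by
      rw [hPdiag]; exact spectrum_conj_diag T d'
    refine ⟨hrevP, ?_, ?_⟩
    · intro z hz
      rw [hspec] at hz
      obtain ⟨i, rfl⟩ := hz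
      exact ⟨Complex.ofReal_im _, by rw [Complex.ofReal_re]; exact Real.exp_pos _⟩
    · have hne : Nonempty (Fin n) := ⟨⟨0, hn⟩⟩
      set s : Finset ℝ := Finset.image d' Finset.univ with hs
      set m := s.card with hm
      set e := s.equivFin with he
      set γ : Fin m → ℝ := fun j => ((e.symm j : {x // x ∈ s}) : ℝ) with hγ
      have hγinj : Function.Injective γ := fun a b hab =>
        e.symm.injective (Subtype.coe_injective hab)
      have hγmem : ∀ j, γ j ∈ s := fun j => (e.symm j).2
      have hsurj : ∀ x ∈ s, ∃ j, γ j = x := fun x hx =>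
        ⟨e ⟨x, hx⟩, by rw [hγ]; simp⟩
      have hmpos : 0 < m := Finset.card_pos.mpr ((Finset.univ_nonempty).image d')
      set f := Lagrange.interpolate Finset.univ γ (Real.log ∘ γ) with hf
      have hinjOn : Set.InjOn γ ↑(Finset.univ : Finset (Fin m)) := fun a _ b _ h => hγinj h
      have hdeg : f.degree < (m : ℕ) := by
        have := Lagrange.degree_interpolate_lt (Real.log ∘ γ) hinjOn
        simpa only [Finset.card_univ, Fintype.card_fin] using this
      have hnat : f.natDegree < m := by
        by_cases hf0 : f = 0
        · rw [hf0]; simpa using hmpos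
        · exact (Polynomial.natDegree_lt_iff_degree_lt hf0).mpr (by simpa using hdeg)
      have heval : ∀ x ∈ s, f.eval x = Real.log x := by
        intro x hx
        obtain ⟨j, rfl⟩ := hsurj x hx
        exact Lagrange.eval_interpolate_at_node _ hinjOn (Finset.mem_univ j)
      set k : Fin m → ℝ := fun j => f.coeff (j : ℕ) with hk
      have hsum_eval : ∀ x : ℝ, ∑ j : Fin m, k j * x ^ (j : ℕ) = f.eval x := fun x => by
        rw [Polynomial.eval_eq_sum_range' hnat]
        exact Fin.sum_univ_eq_sum_range (fun t => f.coeff t * x ^ t) m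
      refine ⟨m, γ, k, hγinj, ?_, ?_, ?_, ?_⟩
      · intro j
        rw [hspec]
        obtain ⟨i, -, hi⟩ := Finset.mem_image.mp (hγmem j)
        exact ⟨i, by show ((d' i : ℝ) : ℂ) = ((γ j : ℝ) : ℂ); exact_mod_cast hi⟩
      · intro z hz
        rw [hspec] at hz
        obtain ⟨i, rfl⟩ := hz
        obtain ⟨j, hj⟩ := hsurj (d' i) (Finset.mem_image_of_mem d' (Finset.mem_univ i))
        exact ⟨j, by show ((γ j : ℝ) : ℂ) = ((d' i : ℝ) : ℂ); exact_mod_cast hj⟩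
      · intro i
        rw [hsum_eval, heval _ (hγmem i)]
      · intro a b hab
        have hQeq : (∑ j : Fin m, k j • P ^ (j : ℕ)) = Q := by
          rw [hPdiag, conj_sum_smul_pow, hQdiag]
          have hfun : (fun i => ∑ j : Fin m, k j * d' i ^ (j : ℕ)) = lam := by
            funext i
            rw [hsum_eval, heval _ (Finset.mem_image_of_mem d' (Finset.mem_univ i))]
            exact Real.log_exp (lam i)
          rw [hfun]
        rw [hQeq]
        exact hQoff a b hab
  · rintro ⟨hrev, hspecpos, m, γ, k, hγinj, hγspec, hγcover, hinterp, hQoff⟩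
    obtain ⟨T, d, hPdiag⟩ := rev_diag hμpos hrev
    have hspec : spectrum ℂ (P.map Complex.ofReal) = Set.range (fun i => (d i : ℂ)) := by
      rw [hPdiag]; exact spectrum_conj_diag T d
    have hdpos : ∀ i, 0 < d i := by
      intro i
      obtain ⟨-, hre⟩ := hspecpos ((d i : ℂ)) (by rw [hspec]; exact ⟨i, rfl⟩)
      rwa [Complex.ofReal_re] at hre
    have hdlog : ∀ i, ∑ j : Fin m, k j * d i ^ (j : ℕ) = Real.log (d i) := by
      intro i
      obtain ⟨j, hj⟩ := hγcover ((d i : ℂ)) (by rw [hspec]; exact ⟨i, rfl⟩)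
      have hji : γ j = d i := by exact_mod_cast hj
      rw [← hji]
      exact hinterp j
    set Q := ∑ j : Fin m, k j • P ^ (j : ℕ) with hQ
    have hQdiag : Q = (T : Matrix (Fin n) (Fin n) ℝ) * Matrix.diagonal (fun i => Real.log (d i)) * (↑T⁻¹ : Matrix (Fin n) (Fin n) ℝ) := by
      rw [hQ, hPdiag, conj_sum_smul_pow]
      have hfun : (fun i => ∑ j : Fin m, k j * d i ^ (j : ℕ)) = fun i => Real.log (d i) := by
        funext i
        exact hdlog i
      rw [hfun]
    have hexpQ : NormedSpace.exp Q = P := by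
      rw [hQdiag, Matrix.exp_units_conj, Matrix.exp_diagonal, hPdiag]
      have hfun : NormedSpace.exp (fun i => Real.log (d i)) = d := by
        rw [Pi.exp_def]
        funext i
        rw [← Real.exp_eq_exp_ℝ]
        exact Real.exp_log (hdpos i)
      rw [hfun]
    have hQentry : ∀ i jj, Q i jj = ∑ j : Fin m, k j * (P ^ (j : ℕ)) i jj := by
      intro i jj
      rw [hQ, Matrix.sum_apply]
      simp [Matrix.smul_apply]
    have hone : (1 : ℂ) ∈ spectrum ℂ (P.map Complex.ofReal) := one_mem_spec hn hP.2
    obtain ⟨j1, hj1⟩ := hγcover 1 hone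
    have hγ1 : γ j1 = 1 := by exact_mod_cast hj1
    have hksum : ∑ j : Fin m, k j = 0 := by
      have h := hinterp j1
      rw [hγ1] at h
      simpa using h
    refine ⟨Q, ⟨⟨fun i j hij => hQoff i j hij, ?_⟩, μ, fun i => le_of_lt (hμpos i), hμsum, ?_⟩, hexpQ⟩
    · intro i
      calc ∑ jj, Q i jj = ∑ jj, ∑ j : Fin m, k j * (P ^ (j : ℕ)) i jj := by
            simp_rw [hQentry]
        _ = ∑ j : Fin m, ∑ jj, k j * (P ^ (j : ℕ)) i jj := Finset.sum_comm
        _ = ∑ j : Fin m, k j := by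
            refine Finset.sum_congr rfl fun j _ => ?_
            rw [← Finset.mul_sum, stoch_pow_row_sum hP.2 _ i, mul_one]
        _ = 0 := hksum
    · intro i j
      rw [hQentry i j, hQentry j i, Finset.mul_sum, Finset.mul_sum]
      refine Finset.sum_congr rfl fun t _ => ?_
      calc μ i * (k t * (P ^ (t : ℕ)) i j) = k t * (μ i * (P ^ (t : ℕ)) i j) := by ring
        _ = k t * (μ j * (P ^ (t : ℕ)) j i) := by rw [rev_pow hrev _ i j]
        _ = μ j * (k t * (P ^ (t : ℕ)) j i) := by ring
end
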